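/- (Norm convergence, deterministic case) Suppose the block indices i(k) are IID uniform on {1,…,m} and the delay vectors j⃗(k) form an arbitrary deterministic sequence in ℕ^m, independent of i(k), with lim inf_k j(k) < ∞. Let ε₁, ε₂, … ∈ (0,∞) with Σ_{l=1}^∞ ε_l < ∞, set c_i = Σ_{l=i}^∞ ε_l and h_j = (1 + c₁/m + Σ_{i=1}^j 1/ε_i)^{-1}, and use step size η^k = c·h_{j(k)} for arbitrary fixed c ∈ (0,1). Then with probability 1, ‖x^k − x*‖ converges (to a finite limit) simultaneously for every fixed point x* of T. -/

import Mathlib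

/-!
Fix a fixed point `x*` and write `s^k = x̂^k - T x̂^k`. The Lyapunov function
`ξ_k = ‖x^k - x*‖² + (1/m) ∑_{d<k} c_{k-d} ‖x^{d+1} - x^d‖²` satisfies
`E[ξ_{k+1} | i(0), …, i(k-1)] ≤ ξ_k - (1 - c) η_k ‖s^k‖² / m`. Averaging over the uniform
block turns the update into a full step of length `η_k / m`; firm nonexpansiveness of `T` gives
`‖s‖² ≤ 2⟪x̂ - x*, s⟫`; and the error `⟪x^k - x̂^k, s⟫` caused by the delay is paid for, through
Young's inequality with weights `ε`, by the drop `c_{k-d} → c_{k+1-d}` of the history weights.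
The step size `h_j` is exactly what balances the two sides.

Since the delays are deterministic, `x^k` is a function of `i(0), …, i(k-1)`, so `ξ` is a
nonnegative supermartingale for the filtration of the past indices. Hence almost surely `ξ_k`
converges and `∑ ‖x^{k+1} - x^k‖² < ∞`, so the history term of `ξ_k` vanishes and `‖x^k - x*‖`
converges. Doing this for a countable dense set of fixed points and using
`|‖x - y‖ - ‖x - z‖| ≤ ‖y - z‖` handles all fixed points at once.
-/

open MeasureTheory ProbabilityTheory Filter Finset
open scoped ENNReal Topology RealInnerProductSpace

theorem two_mul_mul_le_mul_sq_add_inv_mul_sq {e : ℝ} (he : 0 < e) (a b : ℝ) :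
    2 * a * b ≤ e * a ^ 2 + e⁻¹ * b ^ 2 := by
  have hsq : 0 ≤ (e * a - b) ^ 2 / e := by positivity
  have hexp : (e * a - b) ^ 2 / e = e * a ^ 2 + e⁻¹ * b ^ 2 - 2 * a * b := by
    field_simp
    ring
  linarith

theorem sum_Ico_sub_le_sum_range {f : ℕ → ℝ} (hf : ∀ n, 0 ≤ f n) (k J : ℕ) :
    ∑ d ∈ Ico (k - J) k, f (k - d) ≤ ∑ l ∈ range J, f (l + 1) := by
  rw [sum_Ico_reflect f _ (Nat.le_succ k), Nat.add_sub_cancel_left, range_eq_Ico,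
    sum_Ico_add' f 0 J 1, zero_add]
  exact sum_le_sum_of_subset_of_nonneg (Ico_subset_Ico le_rfl (by omega)) fun n _ _ => hf n

theorem two_mul_sum_Ico_mul_le {ε : ℕ → ℝ} (hε : ∀ n, 0 < ε n) (a : ℕ → ℝ) (k J : ℕ) (b : ℝ) :
    2 * (∑ d ∈ Ico (k - J) k, a d) * b ≤
      ∑ d ∈ range k, ε (k - d) * a d ^ 2 + (∑ l ∈ range J, (ε (l + 1))⁻¹) * b ^ 2 := by
  calc 2 * (∑ d ∈ Ico (k - J) k, a d) * b
      = ∑ d ∈ Ico (k - J) k, 2 * a d * b := by rw [mul_sum, sum_mul]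
    _ ≤ ∑ d ∈ Ico (k - J) k, (ε (k - d) * a d ^ 2 + (ε (k - d))⁻¹ * b ^ 2) :=
        sum_le_sum fun d _ => two_mul_mul_le_mul_sq_add_inv_mul_sq (hε _) _ _
    _ = ∑ d ∈ Ico (k - J) k, ε (k - d) * a d ^ 2 +
          (∑ d ∈ Ico (k - J) k, (ε (k - d))⁻¹) * b ^ 2 := by
        rw [sum_add_distrib, sum_mul]
    _ ≤ _ := by
        refine add_le_add (sum_le_sum_of_subset_of_nonneg ?_ fun d _ _ => ?_)
          (mul_le_mul_of_nonneg_right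
            (sum_Ico_sub_le_sum_range (fun n => (inv_pos.2 (hε n)).le) k J) (sq_nonneg b))
        · rw [range_eq_Ico]
          exact Ico_subset_Ico (Nat.zero_le _) le_rfl
        · exact mul_nonneg (hε _).le (sq_nonneg _)

theorem tsum_nat_add_eq_add_tsum {ε : ℕ → ℝ} (hε : Summable ε) (n : ℕ) :
    ∑' t, ε (n + t) = ε n + ∑' t, ε (n + 1 + t) := by
  have hs : Summable fun t => ε (n + t) := by
    simpa only [add_comm] using (summable_nat_add_iff n).2 hε
  rw [hs.tsum_eq_zero_add, add_zero]
  exact congrArg _ (tsum_congr fun t => by rw [add_right_comm, add_assoc])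

theorem tendsto_sum_range_mul_sub_nhds_zero {c g : ℕ → ℝ} (hc : Tendsto c atTop (𝓝 0))
    (hg : Summable g) : Tendsto (fun k => ∑ d ∈ range k, c (k - d) * g d) atTop (𝓝 0) := by
  obtain ⟨B, hB⟩ := hc.abs.bddAbove_range
  have hterm : ∀ d, Tendsto (fun k => if d < k then c (k - d) * g d else 0) atTop (𝓝 0) := by
    intro d
    have hlim : Tendsto (fun k => c (k - d) * g d) atTop (𝓝 0) := by
      simpa using (hc.comp (tendsto_sub_atTop_nat d)).mul_const (g d)
    exact hlim.congr' (eventually_gt_atTop d |>.mono fun k hk => (if_pos hk).symm)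
  have hdom := tendsto_tsum_of_dominated_convergence (summable_abs_iff.2 hg |>.mul_left B) hterm
    (Eventually.of_forall fun k d => by
      split_ifs
      · simpa [abs_mul] using mul_le_mul_of_nonneg_right (hB ⟨k - d, rfl⟩) (abs_nonneg (g d))
      · simpa using mul_nonneg ((abs_nonneg _).trans (hB ⟨0, rfl⟩)) (abs_nonneg (g d)))
  simp only [tsum_zero] at hdom
  refine hdom.congr fun k => ?_
  rw [tsum_eq_sum (s := range k) fun d hd => if_neg (by simpa using hd)]
  exact sum_congr rfl fun d hd => if_pos (mem_range.1 hd)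

theorem exists_tendsto_dist_of_mem_closure {X : Type*} [PseudoMetricSpace X] {u : ℕ → X}
    {D : Set X} (hD : ∀ z ∈ D, ∃ r, Tendsto (fun k => dist (u k) z) atTop (𝓝 r)) {x : X}
    (hx : x ∈ closure D) : ∃ r, Tendsto (fun k => dist (u k) x) atTop (𝓝 r) := by
  refine cauchySeq_tendsto_of_complete (Metric.cauchySeq_iff'.2 fun e he => ?_)
  obtain ⟨z, hzD, hxz⟩ := Metric.mem_closure_iff.1 hx (e / 3) (by positivity)
  obtain ⟨r, hr⟩ := hD z hzD
  obtain ⟨N, hN⟩ := Metric.cauchySeq_iff'.1 hr.cauchySeq (e / 3) (by positivity)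
  refine ⟨N, fun n hn => ?_⟩
  have hnear : ∀ k, dist (dist (u k) x) (dist (u k) z) ≤ dist x z := fun k =>
    dist_dist_dist_le_right _ _ _
  calc dist (dist (u n) x) (dist (u N) x)
      ≤ dist (dist (u n) x) (dist (u n) z) + dist (dist (u n) z) (dist (u N) z)
        + dist (dist (u N) x) (dist (u N) z) := by
        linarith [dist_triangle4 (dist (u n) x) (dist (u n) z) (dist (u N) z) (dist (u N) x),
          dist_comm (dist (u N) z) (dist (u N) x)]
    _ < e := by linarith [hnear n, hnear N, hN n hn]

theorem LipschitzWith.norm_sub_sq_le_two_inner {E : Type*} [NormedAddCommGroup E]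
    [InnerProductSpace ℝ E] {T : E → E} (hT : LipschitzWith 1 T) {xs : E} (hxs : T xs = xs)
    (y : E) : ‖y - T y‖ ^ 2 ≤ 2 * ⟪y - xs, y - T y⟫ := by
  have hle : ‖T y - xs‖ ≤ ‖y - xs‖ := by simpa [hxs] using hT.norm_sub_le y xs
  have hsq : ‖(y - xs) - (y - T y)‖ ^ 2 ≤ ‖y - xs‖ ^ 2 := by
    rw [sub_sub_sub_cancel_left]
    exact pow_le_pow_left₀ (norm_nonneg _) hle 2
  rw [norm_sub_sq_real] at hsq
  linarith

namespace PiLp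

variable {ι : Type*} {H : ι → Type*}

theorem eq_sub_smul_single_of_apply [DecidableEq ι] {p : ℝ≥0∞}
    [∀ i, SeminormedAddCommGroup (H i)] [∀ i, Module ℝ (H i)] {y z u : PiLp p H} {a : ι} {η : ℝ}
    (h : ∀ i, y i = if i = a then z i - η • u i else z i) :
    y = z - η • PiLp.single p a (u a) :=
  PiLp.ext fun i => by
    rw [h, PiLp.sub_apply, PiLp.smul_apply, PiLp.ofLp_single]
    split_ifs with hi
    · subst hi
      rw [Pi.single_eq_same]
    · rw [Pi.single_eq_of_ne hi, smul_zero, sub_zero]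

variable [Fintype ι]

theorem sum_norm_mul_norm_le [∀ i, SeminormedAddCommGroup (H i)] (u v : PiLp 2 H) :
    ∑ i, ‖u i‖ * ‖v i‖ ≤ ‖u‖ * ‖v‖ := by
  simpa only [← norm_eq_of_L2] using Real.sum_mul_le_sqrt_mul_sqrt univ (‖u ·‖) (‖v ·‖)

variable [∀ i, NormedAddCommGroup (H i)] [∀ i, InnerProductSpace ℝ (H i)] [DecidableEq ι]

theorem inner_single_right (z : PiLp 2 H) (a : ι) (v : H a) :
    ⟪z, PiLp.single 2 a v⟫ = ⟪z a, v⟫ := by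
  rw [PiLp.inner_apply, sum_eq_single a (fun i _ hi => by simp [Pi.single_eq_of_ne hi])
    (by simp)]
  simp

theorem sum_norm_sub_smul_single_sq (z s : PiLp 2 H) (η : ℝ) :
    ∑ a, ‖z - η • PiLp.single 2 a (s a)‖ ^ 2 =
      Fintype.card ι * ‖z‖ ^ 2 - 2 * η * ⟪z, s⟫ + η ^ 2 * ‖s‖ ^ 2 := by
  simp only [norm_sub_sq_real, inner_smul_right, inner_single_right, norm_smul, norm_single,
    mul_pow, Real.norm_eq_abs, sq_abs, sum_add_distrib, sum_sub_distrib, ← mul_sum, sum_const,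
    card_univ, nsmul_eq_mul, ← PiLp.inner_apply, ← norm_sq_eq_of_L2]
  ring

theorem sum_norm_smul_single_sq (s : PiLp 2 H) (η : ℝ) :
    ∑ a, ‖η • PiLp.single 2 a (s a)‖ ^ 2 = η ^ 2 * ‖s‖ ^ 2 := by
  simp only [norm_smul, norm_single, mul_pow, Real.norm_eq_abs, sq_abs, ← mul_sum,
    ← norm_sq_eq_of_L2]

end PiLp

section Delay

variable {ι : Type*} [Fintype ι] {H : ι → Type*} [∀ i, NormedAddCommGroup (H i)]
  [∀ i, InnerProductSpace ℝ (H i)]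

theorem abs_inner_sub_le_sum_Ico_norm_mul_norm (x : ℕ → PiLp 2 H) {k J : ℕ} {j : ι → ℕ}
    (hj : ∀ i, j i ≤ J) {y : PiLp 2 H} (hy : ∀ i, y i = x (k - j i) i) (s : PiLp 2 H) :
    |⟪x k - y, s⟫| ≤ (∑ d ∈ Ico (k - J) k, ‖x (d + 1) - x d‖) * ‖s‖ := by
  have htel : ∀ i, (x k - y) i = ∑ d ∈ Ico (k - j i) k, (x (d + 1) - x d) i := fun i => by
    simp only [PiLp.sub_apply, hy]
    exact (sum_Ico_sub (fun d => x d i) (Nat.sub_le k (j i))).symm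
  calc |⟪x k - y, s⟫|
      ≤ ∑ i, ∑ d ∈ Ico (k - J) k, ‖(x (d + 1) - x d) i‖ * ‖s i‖ := by
        rw [PiLp.inner_apply]
        refine (abs_sum_le_sum_abs _ _).trans (sum_le_sum fun i _ => ?_)
        rw [htel, sum_inner]
        refine (abs_sum_le_sum_abs _ _).trans <|
          (sum_le_sum fun d _ => abs_real_inner_le_norm _ _).trans ?_
        exact sum_le_sum_of_subset_of_nonneg (Ico_subset_Ico (by have := hj i; omega) le_rfl)
          fun _ _ _ => by positivity
    _ = ∑ d ∈ Ico (k - J) k, ∑ i, ‖(x (d + 1) - x d) i‖ * ‖s i‖ := sum_comm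
    _ ≤ ∑ d ∈ Ico (k - J) k, ‖x (d + 1) - x d‖ * ‖s‖ :=
        sum_le_sum fun d _ => PiLp.sum_norm_mul_norm_le _ _
    _ = _ := (sum_mul ..).symm

theorem two_mul_abs_inner_sub_le {ε : ℕ → ℝ} (hε : ∀ n, 0 < ε n) (x : ℕ → PiLp 2 H) {k J : ℕ}
    {j : ι → ℕ} (hj : ∀ i, j i ≤ J) {y : PiLp 2 H} (hy : ∀ i, y i = x (k - j i) i)
    (s : PiLp 2 H) {η : ℝ} (hη : 0 ≤ η) :
    2 * η * |⟪x k - y, s⟫| ≤ ∑ d ∈ range k, ε (k - d) * ‖x (d + 1) - x d‖ ^ 2 +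
      η ^ 2 * (∑ l ∈ range J, (ε (l + 1))⁻¹) * ‖s‖ ^ 2 := by
  have hwin := two_mul_sum_Ico_mul_le hε (fun d => ‖x (d + 1) - x d‖) k J (η * ‖s‖)
  calc 2 * η * |⟪x k - y, s⟫|
      ≤ 2 * η * ((∑ d ∈ Ico (k - J) k, ‖x (d + 1) - x d‖) * ‖s‖) := by
        gcongr
        exact abs_inner_sub_le_sum_Ico_norm_mul_norm x hj hy s
    _ ≤ _ := by linarith

end Delay

section Energy

variable {E : Type*} [SeminormedAddCommGroup E]

noncomputable def arockEnergy (m : ℕ) (cc : ℕ → ℝ) (x : ℕ → E) (xs : E) (k : ℕ) : ℝ :=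
  ‖x k - xs‖ ^ 2 + (m : ℝ)⁻¹ * ∑ d ∈ range k, cc (k - d) * ‖x (d + 1) - x d‖ ^ 2

variable {m : ℕ} {cc : ℕ → ℝ} {xs : E} {k : ℕ}

theorem arockEnergy_nonneg (hcc : ∀ n, 0 ≤ cc n) (x : ℕ → E) :
    0 ≤ arockEnergy m cc x xs k := by
  have := sum_nonneg fun d (_ : d ∈ range k) =>
    mul_nonneg (hcc (k - d)) (sq_nonneg ‖x (d + 1) - x d‖)
  unfold arockEnergy
  positivity

theorem arockEnergy_congr {x y : ℕ → E} (h : ∀ d ≤ k, x d = y d) :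
    arockEnergy m cc x xs k = arockEnergy m cc y xs k := by
  unfold arockEnergy
  rw [h k le_rfl, sum_congr rfl fun d hd => by
    rw [h d (mem_range.1 hd).le, h (d + 1) (mem_range.1 hd)]]

theorem arockEnergy_update_succ (x : ℕ → E) (v : E) :
    arockEnergy m cc (Function.update x (k + 1) v) xs (k + 1) = ‖v - xs‖ ^ 2 + (m : ℝ)⁻¹ *
      (cc 1 * ‖v - x k‖ ^ 2 + ∑ d ∈ range k, cc (k + 1 - d) * ‖x (d + 1) - x d‖ ^ 2) := by
  unfold arockEnergy
  rw [sum_range_succ, add_comm (∑ d ∈ range k, _), Nat.add_sub_cancel_left, Function.update_self,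
    Function.update_of_ne (by omega)]
  congr 3
  refine sum_congr rfl fun d hd => ?_
  have hd := mem_range.1 hd
  rw [Function.update_of_ne (by omega), Function.update_of_ne (by omega)]

theorem arockEnergy_eq_add_sum {ε : ℕ → ℝ} (hcc : ∀ n, cc n = ε n + cc (n + 1)) (x : ℕ → E) :
    arockEnergy m cc x xs k = ‖x k - xs‖ ^ 2 + (m : ℝ)⁻¹ *
      (∑ d ∈ range k, ε (k - d) * ‖x (d + 1) - x d‖ ^ 2 +
        ∑ d ∈ range k, cc (k + 1 - d) * ‖x (d + 1) - x d‖ ^ 2) := by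
  unfold arockEnergy
  rw [← sum_add_distrib]
  congr 2
  refine sum_congr rfl fun d hd => ?_
  rw [hcc, show k - d + 1 = k + 1 - d by have := mem_range.1 hd; omega]
  ring

theorem exists_tendsto_dist_of_tendsto_arockEnergy (hcc : Tendsto cc atTop (𝓝 0)) {x : ℕ → E}
    (hx : Summable fun d => ‖x (d + 1) - x d‖ ^ 2) {L : ℝ}
    (hL : Tendsto (arockEnergy m cc x xs) atTop (𝓝 L)) :
    ∃ r, Tendsto (fun k => dist (x k) xs) atTop (𝓝 r) := by
  have hsq : Tendsto (fun k => ‖x k - xs‖ ^ 2) atTop (𝓝 L) := by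
    simpa [arockEnergy] using
      hL.sub ((tendsto_sum_range_mul_sub_nhds_zero hcc hx).const_mul (m : ℝ)⁻¹)
  exact ⟨√L, by simpa [dist_eq_norm, Real.sqrt_sq (norm_nonneg _)] using hsq.sqrt⟩

end Energy

section Descent

variable {ι : Type*} [Fintype ι] [DecidableEq ι] {H : ι → Type*} [∀ i, NormedAddCommGroup (H i)]
  [∀ i, InnerProductSpace ℝ (H i)] {cc : ℕ → ℝ} {xs : PiLp 2 H}

theorem sum_arockEnergy_update_succ [Nonempty ι] (x : ℕ → PiLp 2 H) (k : ℕ) (s : PiLp 2 H)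
    (η : ℝ) :
    ∑ a, arockEnergy (Fintype.card ι) cc
        (Function.update x (k + 1) (x k - η • PiLp.single 2 a (s a))) xs (k + 1) =
      Fintype.card ι * ‖x k - xs‖ ^ 2 - 2 * η * ⟪x k - xs, s⟫ + η ^ 2 * ‖s‖ ^ 2 +
        (Fintype.card ι : ℝ)⁻¹ * cc 1 * (η ^ 2 * ‖s‖ ^ 2) +
        ∑ d ∈ range k, cc (k + 1 - d) * ‖x (d + 1) - x d‖ ^ 2 := by
  have hm : (Fintype.card ι : ℝ) ≠ 0 := by positivity
  simp only [arockEnergy_update_succ, sub_right_comm _ _ xs, sub_sub_cancel_left, norm_neg,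
    sum_add_distrib, ← mul_sum, PiLp.sum_norm_sub_smul_single_sq, PiLp.sum_norm_smul_single_sq,
    sum_const, card_univ, nsmul_eq_mul]
  field_simp
  ring

theorem sum_arockEnergy_update_le [Nonempty ι] {T : PiLp 2 H → PiLp 2 H} (hT : LipschitzWith 1 T)
    (hxs : T xs = xs) {ε : ℕ → ℝ} (hε : ∀ n, 0 < ε n) (hcc : ∀ n, cc n = ε n + cc (n + 1))
    (x : ℕ → PiLp 2 H) {k J : ℕ} {j : ι → ℕ} (hj : ∀ i, j i ≤ J) {y : PiLp 2 H}
    (hy : ∀ i, y i = x (k - j i) i) {η c : ℝ} (hη : 0 ≤ η)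
    (hηc : η * (1 + cc 1 / Fintype.card ι + ∑ l ∈ range J, (ε (l + 1))⁻¹) ≤ c) :
    ∑ a, arockEnergy (Fintype.card ι) cc
        (Function.update x (k + 1) (x k - η • PiLp.single 2 a ((y - T y) a))) xs (k + 1) ≤
      Fintype.card ι * arockEnergy (Fintype.card ι) cc x xs k - (1 - c) * (η * ‖y - T y‖ ^ 2) := by
  set m : ℝ := (Fintype.card ι : ℝ)
  set s := y - T y
  have hm : m ≠ 0 := by positivity
  have hcoco := mul_le_mul_of_nonneg_left (hT.norm_sub_sq_le_two_inner hxs y) hη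
  have hcross := two_mul_abs_inner_sub_le hε x hj hy s hη
  have habs := mul_le_mul_of_nonneg_left (neg_abs_le ⟪x k - y, s⟫) hη
  have hstep : η ^ 2 * ‖s‖ ^ 2 + m⁻¹ * cc 1 * (η ^ 2 * ‖s‖ ^ 2) +
      η ^ 2 * (∑ l ∈ range J, (ε (l + 1))⁻¹) * ‖s‖ ^ 2 ≤ c * (η * ‖s‖ ^ 2) := by
    have := mul_le_mul_of_nonneg_right hηc (by positivity : 0 ≤ η * ‖s‖ ^ 2)
    rw [div_eq_inv_mul] at this
    linarith
  have hsplit : ⟪x k - xs, s⟫ = ⟪y - xs, s⟫ + ⟪x k - y, s⟫ := by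
    rw [← inner_add_left, sub_add_sub_cancel']
  rw [sum_arockEnergy_update_succ, arockEnergy_eq_add_sum hcc, mul_add, mul_inv_cancel_left₀ hm,
    hsplit]
  linarith

end Descent

section Past

variable {Ω ι : Type*} {idx : ℕ → Ω → ι}

def DependsOnPast (idx : ℕ → Ω → ι) (k : ℕ) {β : Type*} (f : Ω → β) : Prop :=
  ∀ ω ω', (∀ j < k, idx j ω = idx j ω') → f ω = f ω'

theorem DependsOnPast.exists_eq_comp {k : ℕ} {β : Type*} [Nonempty β] {f : Ω → β}
    (hf : DependsOnPast idx k f) :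
    ∃ φ : (Fin k → ι) → β, f = φ ∘ fun ω (j : Fin k) => idx j ω := by
  have hfac : Function.FactorsThrough f fun ω (j : Fin k) => idx j ω :=
    fun ω ω' h => hf ω ω' fun j hj => congrFun h ⟨j, hj⟩
  exact ⟨Function.extend _ f fun _ => Classical.arbitrary β,
    funext fun ω => (hfac.extend_apply _ ω).symm⟩

variable [mΩ : MeasurableSpace Ω] [mι : MeasurableSpace ι]

/-- Unlike `Filtration.natural`, the σ-algebra at time `k` is generated by
`idx 0, …, idx (k - 1)` only, so that `idx k` is independent of it. -/
def pastFiltration (idx : ℕ → Ω → ι) (hidx : ∀ k, Measurable (idx k)) : Filtration ℕ mΩ where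
  seq k := ⨆ j < k, mι.comap (idx j)
  mono' _ _ hkl := iSup₂_le fun j hj => le_iSup₂ (f := fun j (_ : j < _) => mι.comap (idx j)) j
    (lt_of_lt_of_le hj hkl)
  le' _ := iSup₂_le fun j _ => (hidx j).comap_le

theorem measurable_pastFiltration_history (hidx : ∀ k, Measurable (idx k)) (k : ℕ) :
    Measurable[pastFiltration idx hidx k] fun ω (j : Fin k) => idx j ω := by
  let _ : MeasurableSpace Ω := pastFiltration idx hidx k
  exact measurable_pi_lambda _ fun j => Measurable.of_comap_le <|
    le_iSup₂ (f := fun j (_ : j < k) => mι.comap (idx j)) (j : ℕ) j.2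

theorem ProbabilityTheory.iIndepFun.indep_pastFiltration {μ : Measure Ω}
    (hind : iIndepFun idx μ) (hidx : ∀ k, Measurable (idx k)) (k : ℕ) :
    Indep (mι.comap (idx k)) (pastFiltration idx hidx k) μ := by
  have := indep_iSup_of_disjoint (fun j => (hidx j).comap_le) ((iIndepFun_iff_iIndep _ _ _).1 hind)
    (S := {k}) (T := {j | j < k}) (by simp)
  rw [_root_.iSup_singleton] at this
  exact this

variable [Countable ι] [MeasurableSingletonClass ι]

theorem DependsOnPast.stronglyMeasurable {k : ℕ} {β : Type*} [TopologicalSpace β] [Nonempty β]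
    {f : Ω → β} (hf : DependsOnPast idx k f) (hidx : ∀ k, Measurable (idx k)) :
    StronglyMeasurable[pastFiltration idx hidx k] f := by
  obtain ⟨φ, rfl⟩ := hf.exists_eq_comp
  exact StronglyMeasurable.of_discrete.comp_measurable (measurable_pastFiltration_history hidx k)

theorem DependsOnPast.integrable [Finite ι] {μ : Measure Ω} [IsFiniteMeasure μ] {k : ℕ}
    {E : Type*} [NormedAddCommGroup E] {f : Ω → E} (hf : DependsOnPast idx k f)
    (hidx : ∀ k, Measurable (idx k)) : Integrable f μ := by
  have hmeas := (hf.stronglyMeasurable hidx).mono ((pastFiltration idx hidx).le k)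
  obtain ⟨φ, rfl⟩ := hf.exists_eq_comp
  obtain ⟨C, hC⟩ := Finite.exists_le fun v => ‖φ v‖
  exact Integrable.of_bound hmeas.aestronglyMeasurable C (ae_of_all _ fun ω => hC _)

end Past

section Supermartingale

variable {Ω : Type*} [mΩ : MeasurableSpace Ω] {μ : Measure Ω} [IsFiniteMeasure μ]

theorem condExp_comp_ae_eq_sum_of_indep {ι : Type*} [Fintype ι] [mι : MeasurableSpace ι]
    [MeasurableSingletonClass ι] {𝓖 : MeasurableSpace Ω} (h𝓖 : 𝓖 ≤ mΩ) {Z : Ω → ι}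
    (hZ : Measurable[mΩ] Z) (hind : Indep (mι.comap Z) 𝓖 μ) {G : ι → Ω → ℝ}
    (hG : ∀ a, StronglyMeasurable[𝓖] (G a)) (hGi : ∀ a, Integrable (G a) μ) :
    μ[fun ω => G (Z ω) ω | 𝓖] =ᵐ[μ] fun ω => ∑ a, μ.real (Z ⁻¹' {a}) * G a ω := by
  classical
  have hset : ∀ a, MeasurableSet[mΩ] (Z ⁻¹' {a}) := fun a => hZ (measurableSet_singleton a)
  have hdecomp : (fun ω => G (Z ω) ω) = ∑ a, (Z ⁻¹' {a}).indicator (G a) := by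
    funext ω
    rw [Finset.sum_apply, sum_eq_single (Z ω) (fun a _ ha => Set.indicator_of_notMem
      (by simpa [eq_comm] using ha) _) (by simp)]
    simp
  have hblock : ∀ a, μ[(Z ⁻¹' {a}).indicator (G a) | 𝓖] =ᵐ[μ]
      fun ω => μ.real (Z ⁻¹' {a}) * G a ω := by
    intro a
    have hmul : (Z ⁻¹' {a}).indicator (G a) = G a * (Z ⁻¹' {a}).indicator 1 := by
      funext ω
      simp [Set.indicator_apply]
    have hconst : μ[(Z ⁻¹' {a}).indicator 1 | 𝓖] =ᵐ[μ] fun _ => μ.real (Z ⁻¹' {a}) := by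
      rw [← integral_indicator_one (hset a)]
      exact condExp_indep_eq hZ.comap_le h𝓖
        (stronglyMeasurable_one.indicator
          ((measurableSet_singleton a).preimage (comap_measurable Z))) hind
    rw [hmul]
    filter_upwards [condExp_mul_of_stronglyMeasurable_left (hG a)
      (hmul ▸ (hGi a).indicator (hset a))
      (show Integrable ((Z ⁻¹' {a}).indicator 1) μ from (integrable_const 1).indicator (hset a)),
      hconst]
      with ω h1 h2
    rw [h1, Pi.mul_apply, h2, mul_comm]
  rw [hdecomp]
  filter_upwards [condExp_finsetSum (fun a _ => (hGi a).indicator (hset a)) 𝓖,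
    ae_all_iff.2 hblock] with ω h1 h2
  rw [h1, Finset.sum_apply]
  exact sum_congr rfl fun a _ => h2 a

theorem MeasureTheory.Supermartingale.exists_ae_tendsto_of_nonneg {ℱ : Filtration ℕ mΩ}
    {f : ℕ → Ω → ℝ} (hf : Supermartingale f ℱ μ) (hnonneg : ∀ n ω, 0 ≤ f n ω) :
    ∀ᵐ ω ∂μ, ∃ c, Tendsto (fun n => f n ω) atTop (𝓝 c) := by
  have hbdd : ∀ n, eLpNorm ((-f) n) 1 μ ≤ (∫ ω, f 0 ω ∂μ).toNNReal := by
    intro n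
    rw [Pi.neg_apply, eLpNorm_neg, eLpNorm_one_eq_lintegral_enorm]
    simp_rw [Real.enorm_eq_ofReal (hnonneg n _)]
    rw [← ofReal_integral_eq_lintegral_ofReal (hf.integrable n) (ae_of_all _ (hnonneg n))]
    refine ENNReal.ofReal_le_ofReal ?_
    simpa using hf.setIntegral_le (Nat.zero_le n) MeasurableSet.univ
  filter_upwards [hf.neg.exists_ae_tendsto_of_bdd hbdd] with ω ⟨c, hc⟩
  exact ⟨-c, by simpa using hc.neg⟩

theorem ae_tendsto_and_summable_of_condExp_le_sub {ℱ : Filtration ℕ mΩ} {Y D : ℕ → Ω → ℝ}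
    (hY : StronglyAdapted ℱ Y) (hYi : ∀ n, Integrable (Y n) μ) (hY0 : ∀ n ω, 0 ≤ Y n ω)
    (hD : StronglyAdapted ℱ D) (hDi : ∀ n, Integrable (D n) μ) (hD0 : ∀ n ω, 0 ≤ D n ω)
    (hstep : ∀ n, μ[Y (n + 1) | ℱ n] ≤ᵐ[μ] Y n - D n) :
    ∀ᵐ ω ∂μ, (∃ L, Tendsto (fun n => Y n ω) atTop (𝓝 L)) ∧ Summable fun n => D n ω := by
  have hsumD_meas : ∀ n l, n ≤ l + 1 → StronglyMeasurable[ℱ l] (∑ k ∈ range n, D k) :=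
    fun n l hnl => stronglyMeasurable_sum _ fun k hk =>
      (hD k).mono (ℱ.mono (by have := mem_range.1 hk; omega))
  have hsumD_int : ∀ n, Integrable (∑ k ∈ range n, D k) μ := fun n =>
    integrable_finsetSum' _ fun k _ => hDi k
  have hYsuper : Supermartingale Y ℱ μ := supermartingale_nat hY hYi fun n => by
    filter_upwards [hstep n] with ω hω
    linarith [hD0 n ω, hω, Pi.sub_apply (Y n) (D n) ω]
  have hZsuper : Supermartingale (fun n => Y n + ∑ k ∈ range n, D k) ℱ μ := by
    refine supermartingale_nat (fun n => (hY n).add (hsumD_meas n n n.le_succ))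
      (fun n => (hYi n).add (hsumD_int n)) fun n => ?_
    filter_upwards [condExp_add (hYi (n + 1)) (hsumD_int (n + 1)) (ℱ n), hstep n] with ω h1 h2
    rw [h1, Pi.add_apply, condExp_of_stronglyMeasurable (ℱ.le n) (hsumD_meas _ _ le_rfl)
      (hsumD_int _)]
    simp only [Pi.sub_apply, Pi.add_apply, Finset.sum_apply, sum_range_succ] at h2 ⊢
    linarith
  filter_upwards [hYsuper.exists_ae_tendsto_of_nonneg hY0,
    hZsuper.exists_ae_tendsto_of_nonneg fun n ω => by
      simpa using add_nonneg (hY0 n ω) (sum_nonneg fun k _ => hD0 k ω)]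
    with ω ⟨L, hL⟩ ⟨L', hL'⟩
  refine ⟨⟨L, hL⟩, ((hasSum_iff_tendsto_nat_of_nonneg (hD0 · ω) (L' - L)).2 ?_).summable⟩
  simpa [Finset.sum_apply] using hL'.sub hL

end Supermartingale

section ARock

variable {ι : Type*} [DecidableEq ι] {H : ι → Type*} [∀ i, NormedAddCommGroup (H i)]
  [∀ i, InnerProductSpace ℝ (H i)] {Ω : Type*}

structure IsARockRun (T : PiLp 2 H → PiLp 2 H) (idx : ℕ → Ω → ι) (jv : ℕ → ι → ℕ) (η : ℕ → ℝ)
    (x xhat : ℕ → Ω → PiLp 2 H) : Prop where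
  initial : ∃ x0, ∀ ω, x 0 ω = x0
  delayed : ∀ k ω i, xhat k ω i = x (k - jv k i) ω i
  step : ∀ k ω, x (k + 1) ω =
    x k ω - η k • PiLp.single 2 (idx k ω) ((xhat k ω - T (xhat k ω)) (idx k ω))

namespace IsARockRun

variable {T : PiLp 2 H → PiLp 2 H} {idx : ℕ → Ω → ι} {jv : ℕ → ι → ℕ} {η : ℕ → ℝ}
  {x xhat : ℕ → Ω → PiLp 2 H}

theorem dependsOnPast (hx : IsARockRun T idx jv η x xhat) {d k : ℕ} (hd : d ≤ k) :
    DependsOnPast idx k (x d) := by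
  intro ω ω' h
  induction k generalizing d with
  | zero =>
    obtain ⟨x0, hx0⟩ := hx.initial
    rw [Nat.le_zero.1 hd, hx0, hx0]
  | succ k ih =>
    have ih := fun d (hd : d ≤ k) => ih hd fun j hj => h j (hj.trans k.lt_succ_self)
    rcases Nat.of_le_succ hd with hd | rfl
    · exact ih d hd
    · have hxhat : xhat k ω = xhat k ω' := PiLp.ext fun i => by
        rw [hx.delayed, hx.delayed, ih _ (Nat.sub_le k (jv k i))]
      rw [hx.step, hx.step, h k k.lt_succ_self, hxhat, ih k le_rfl]

theorem dependsOnPast_delayed (hx : IsARockRun T idx jv η x xhat) (k : ℕ) :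
    DependsOnPast idx k (xhat k) := fun ω ω' h => PiLp.ext fun i => by
  rw [hx.delayed, hx.delayed, hx.dependsOnPast (Nat.sub_le k (jv k i)) ω ω' h]

theorem norm_step_sq_le [Fintype ι] (hx : IsARockRun T idx jv η x xhat) {k : ℕ} (hη : 0 ≤ η k)
    (hη1 : η k ≤ 1) (ω : Ω) :
    ‖x (k + 1) ω - x k ω‖ ^ 2 ≤ η k * ‖xhat k ω - T (xhat k ω)‖ ^ 2 := by
  set s := xhat k ω - T (xhat k ω)
  calc ‖x (k + 1) ω - x k ω‖ ^ 2 = η k * (η k * ‖s (idx k ω)‖ ^ 2) := by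
        rw [hx.step, sub_sub_cancel_left, norm_neg, norm_smul, PiLp.norm_single, mul_pow,
          Real.norm_eq_abs, sq_abs, sq (η k), mul_assoc]
    _ ≤ η k * ‖s (idx k ω)‖ ^ 2 :=
        mul_le_of_le_one_left (mul_nonneg hη (sq_nonneg _)) hη1
    _ ≤ η k * ‖s‖ ^ 2 :=
        mul_le_mul_of_nonneg_left (pow_le_pow_left₀ (norm_nonneg _) (PiLp.norm_apply_le _ _) 2) hη

variable [Fintype ι] [Nonempty ι] [MeasurableSpace ι] [MeasurableSingletonClass ι]
  [MeasurableSpace Ω] {μ : Measure Ω} [IsProbabilityMeasure μ] {xs : PiLp 2 H} {ε cc : ℕ → ℝ}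
  {c : ℝ}

theorem condExp_arockEnergy_succ_le (hx : IsARockRun T idx jv η x xhat) (hT : LipschitzWith 1 T)
    (hxs : T xs = xs) (hidx : ∀ k, Measurable (idx k))
    (hunif : ∀ k a, μ (idx k ⁻¹' {a}) = (Fintype.card ι : ℝ≥0∞)⁻¹) (hind : iIndepFun idx μ)
    (hε : ∀ n, 0 < ε n) (hcc : ∀ n, cc n = ε n + cc (n + 1)) {k : ℕ} (hη : 0 ≤ η k)
    (hηc : η k * (1 + cc 1 / Fintype.card ι + ∑ l ∈ range (univ.sup (jv k)), (ε (l + 1))⁻¹)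
      ≤ c) :
    μ[fun ω => arockEnergy (Fintype.card ι) cc (x · ω) xs (k + 1) | pastFiltration idx hidx k]
      ≤ᵐ[μ] fun ω => arockEnergy (Fintype.card ι) cc (x · ω) xs k -
        (Fintype.card ι : ℝ)⁻¹ * ((1 - c) * (η k * ‖xhat k ω - T (xhat k ω)‖ ^ 2)) := by
  -- `G a ω` is the energy at time `k + 1` had block `a` been drawn at time `k`.
  set G : ι → Ω → ℝ := fun a ω => arockEnergy (Fintype.card ι) cc (Function.update (x · ω) (k + 1)
    (x k ω - η k • PiLp.single 2 a ((xhat k ω - T (xhat k ω)) a))) xs (k + 1)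
  have hG : ∀ a, DependsOnPast idx k (G a) := fun a ω ω' h => by
    simp only [G, hx.dependsOnPast_delayed k ω ω' h, hx.dependsOnPast le_rfl ω ω' h]
    refine arockEnergy_congr fun d hd => ?_
    rcases eq_or_ne d (k + 1) with rfl | hne
    · simp
    · simp [Function.update_of_ne hne, hx.dependsOnPast (by omega : d ≤ k) ω ω' h]
  have hnext : (fun ω => arockEnergy (Fintype.card ι) cc (x · ω) xs (k + 1)) =
      fun ω => G (idx k ω) ω := funext fun ω => by
    simp only [G, ← hx.step, Function.update_eq_self]
  rw [hnext]
  filter_upwards [condExp_comp_ae_eq_sum_of_indep ((pastFiltration idx hidx).le k) (hidx k)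
    (hind.indep_pastFiltration hidx k) (fun a => (hG a).stronglyMeasurable hidx)
    fun a => (hG a).integrable hidx] with ω hω
  have hm : (0 : ℝ) < Fintype.card ι := by positivity
  simp only [measureReal_def, hunif, ENNReal.toReal_inv, ENNReal.toReal_natCast] at hω
  rw [hω, ← mul_sum, inv_mul_le_iff₀ hm, mul_sub, mul_inv_cancel_left₀ hm.ne']
  exact sum_arockEnergy_update_le hT hxs hε hcc (x · ω) (fun i => le_sup (f := jv k) (mem_univ i))
    (hx.delayed k ω) hη hηc

theorem ae_tendsto_dist (hx : IsARockRun T idx jv η x xhat) (hT : LipschitzWith 1 T)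
    (hxs : T xs = xs) (hidx : ∀ k, Measurable (idx k))
    (hunif : ∀ k a, μ (idx k ⁻¹' {a}) = (Fintype.card ι : ℝ≥0∞)⁻¹) (hind : iIndepFun idx μ)
    (hε : ∀ n, 0 < ε n) (hcc : ∀ n, cc n = ε n + cc (n + 1)) (hcc0 : ∀ n, 0 ≤ cc n)
    (hcclim : Tendsto cc atTop (𝓝 0)) (hc : c < 1) (hη : ∀ k, 0 ≤ η k)
    (hηc : ∀ k, η k * (1 + cc 1 / Fintype.card ι + ∑ l ∈ range (univ.sup (jv k)), (ε (l + 1))⁻¹)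
      ≤ c) :
    ∀ᵐ ω ∂μ, ∃ r, Tendsto (fun k => dist (x k ω) xs) atTop (𝓝 r) := by
  set m := Fintype.card ι
  set D : ℕ → Ω → ℝ := fun k ω => (m : ℝ)⁻¹ * ((1 - c) * (η k * ‖xhat k ω - T (xhat k ω)‖ ^ 2))
  have hY : ∀ k, DependsOnPast idx k fun ω => arockEnergy m cc (x · ω) xs k :=
    fun k ω ω' h => arockEnergy_congr fun d hd => hx.dependsOnPast hd ω ω' h
  have hD : ∀ k, DependsOnPast idx k (D k) := fun k ω ω' h => by
    simp only [D, hx.dependsOnPast_delayed k ω ω' h]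
  have hD0 : ∀ k ω, 0 ≤ D k ω := fun k ω =>
    mul_nonneg (by positivity) (mul_nonneg (sub_nonneg.2 hc.le) (mul_nonneg (hη k) (sq_nonneg _)))
  have hη1 : ∀ k, η k ≤ 1 := fun k => by
    have := sum_nonneg fun l (_ : l ∈ range (univ.sup (jv k))) => (inv_pos.2 (hε (l + 1))).le
    have := div_nonneg (hcc0 1) (Nat.cast_nonneg (α := ℝ) m)
    nlinarith [hηc k, hη k]
  filter_upwards [ae_tendsto_and_summable_of_condExp_le_sub
    (fun k => (hY k).stronglyMeasurable hidx) (fun k => (hY k).integrable hidx)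
    (fun k ω => arockEnergy_nonneg hcc0 _) (fun k => (hD k).stronglyMeasurable hidx)
    (fun k => (hD k).integrable hidx) hD0
    fun k => hx.condExp_arockEnergy_succ_le hT hxs hidx hunif hind hε hcc (hη k) (hηc k)]
    with ω ⟨⟨L, hL⟩, hDsum⟩
  refine exists_tendsto_dist_of_tendsto_arockEnergy hcclim ?_ hL
  refine Summable.of_nonneg_of_le (fun _ => sq_nonneg _) (fun k => ?_)
    (hDsum.mul_left (m / (1 - c)))
  have hm : (m : ℝ) ≠ 0 := by positivity
  have hc' : 1 - c ≠ 0 := by linarith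
  calc ‖x (k + 1) ω - x k ω‖ ^ 2 ≤ η k * ‖xhat k ω - T (xhat k ω)‖ ^ 2 :=
        hx.norm_step_sq_le (hη k) (hη1 k) ω
    _ = m / (1 - c) * D k ω := by
        simp only [D]
        field_simp

end IsARockRun

end ARock

theorem arock_norm_convergence_deterministic_general
    {m : ℕ} (hm : 0 < m)
    {H : Fin m → Type*} [∀ i, NormedAddCommGroup (H i)]
    [∀ i, InnerProductSpace ℝ (H i)]
    [∀ i, SecondCountableTopology (H i)]
    (T : PiLp 2 H → PiLp 2 H) (hT : LipschitzWith 1 T)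
    {Ω : Type*} [MeasurableSpace Ω] (μ : Measure Ω) [IsProbabilityMeasure μ]
    -- block indices: IID uniform
    (idx : ℕ → Ω → Fin m)
    (hidx_meas : ∀ k, Measurable (idx k))
    (hidx_unif : ∀ k a, μ {ω | idx k ω = a} = ((m : ℝ≥0∞))⁻¹)
    (hidx_indep : iIndepFun idx μ)
    -- deterministic delay vectors, with finite liminf of the current delay
    (jv : ℕ → Fin m → ℕ)
    -- parameters ε₁, ε₂, … ∈ (0,∞) with ∑ εₗ < ∞ and coefficients cᵢ = ∑_{l=i}^∞ εₗ
    (ε : ℕ → ℝ) (hε : ∀ i, 0 < ε i)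
    (hsum : Summable fun l : ℕ => ε (l + 1))
    (cc : ℕ → ℝ) (hcc : ∀ i, cc i = ∑' t : ℕ, ε (i + t))
    -- step sizes η^k ≤ h_{j(k)} where h_j = (1 + c₁/m + ∑_{i=1}^j 1/εᵢ)⁻¹
    (hj : ℕ → ℝ)
    (hhj : ∀ j, hj j = (1 + cc 1 / (m : ℝ) + ∑ i ∈ Finset.range j, (ε (i + 1))⁻¹)⁻¹)
    (c : ℝ) (hc : c ∈ Set.Ioo (0 : ℝ) 1)
    (η : ℕ → ℝ) (hη : ∀ k, η k = c * hj (Finset.univ.sup (jv k)))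
    -- the iterates
    (x : ℕ → Ω → PiLp 2 H) (x0 : PiLp 2 H) (hx0 : ∀ ω, x 0 ω = x0)
    -- the delayed iterate x̂^k = x^{k−j⃗(k)} (with x^n = x^0 for n < 0)
    (xhat : ℕ → Ω → PiLp 2 H)
    (hxhat : ∀ (k : ℕ) (ω : Ω) (l : Fin m), xhat k ω l = x (k - jv k l) ω l)
    -- the ARock recursion
    (hrec : ∀ (k : ℕ) (ω : Ω) (i : Fin m),
      x (k + 1) ω i = if i = idx k ω then
          x k ω i - η k • (xhat k ω i - T (xhat k ω) i)
        else x k ω i) :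
    -- conclusion: a.s., ‖x^k − x*‖ converges for every fixed point x* of T
    ∀ᵐ ω ∂μ, ∀ xs : PiLp 2 H, T xs = xs →
      ∃ r : ℝ, Filter.Tendsto (fun k => ‖x k ω - xs‖) Filter.atTop (𝓝 r) := by
  obtain ⟨hc0, hc1⟩ := hc
  have : Nonempty (Fin m) := ⟨⟨0, hm⟩⟩
  have hcc_succ : ∀ n, cc n = ε n + cc (n + 1) := fun n => by
    rw [hcc, hcc, tsum_nat_add_eq_add_tsum ((summable_nat_add_iff 1).1 hsum)]
  have hcc0 : ∀ n, 0 ≤ cc n := fun n => hcc n ▸ tsum_nonneg fun t => (hε _).le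
  have hcclim : Tendsto cc atTop (𝓝 0) :=
    (tendsto_sum_nat_add ε).congr fun n => by rw [hcc]; exact tsum_congr fun t => by rw [add_comm]
  have hbracket : ∀ J, 0 < 1 + cc 1 / m + ∑ l ∈ range J, (ε (l + 1))⁻¹ := fun J =>
    add_pos_of_pos_of_nonneg (add_pos_of_pos_of_nonneg one_pos (div_nonneg (hcc0 1) m.cast_nonneg))
      (sum_nonneg fun l _ => (inv_pos.2 (hε _)).le)
  have hrun : IsARockRun T idx jv η x xhat := ⟨⟨x0, hx0⟩, hxhat, fun k ω =>
    PiLp.eq_sub_smul_single_of_apply fun i => by rw [hrec, PiLp.sub_apply]⟩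
  obtain ⟨D, hDfix, hDc, hDdense⟩ := (TopologicalSpace.IsSeparable.of_separableSpace
    {z : PiLp 2 H | T z = z}).exists_countable_dense_subset
  have hconv := (ae_ball_iff hDc).2 fun z hz => hrun.ae_tendsto_dist hT (hDfix hz) hidx_meas
    (fun k a => by rw [Fintype.card_fin]; exact hidx_unif k a) hidx_indep hε hcc_succ hcc0 hcclim
    hc1 (fun k => by rw [hη, hhj]; exact mul_nonneg hc0.le (inv_nonneg.2 (hbracket _).le))
    fun k => by
      rw [hη, hhj, Fintype.card_fin, mul_assoc, inv_mul_cancel₀ (hbracket _).ne', mul_one]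
  filter_upwards [hconv] with ω hω xs hxs
  simpa only [dist_eq_norm] using exists_tendsto_dist_of_mem_closure hω (hDdense hxs)

/-- **Norm convergence, deterministic case.** Under IID uniform blocks and an arbitrary
deterministic delay sequence with `lim inf j(k) < ∞`, with `∑ εₗ < ∞`, coefficients
`cᵢ = ∑_{l=i}^∞ εₗ`, `h_j = (1 + c₁/m + ∑_{i=1}^j 1/εᵢ)⁻¹` and step size
`η^k = c·h_{j(k)}`, `c ∈ (0,1)`: with probability 1, `‖x^k − x*‖` converges
simultaneously for every fixed point `x*` of `T`. -/
theorem arock_norm_convergence_deterministic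
    {m : ℕ} (hm : 0 < m)
    {H : Fin m → Type*} [∀ i, NormedAddCommGroup (H i)]
    [∀ i, InnerProductSpace ℝ (H i)] [∀ i, CompleteSpace (H i)]
    [∀ i, SecondCountableTopology (H i)]
    [MeasurableSpace (PiLp 2 H)] [BorelSpace (PiLp 2 H)]
    (T : PiLp 2 H → PiLp 2 H) (hT : LipschitzWith 1 T) (hfix : ∃ z, T z = z)
    {Ω : Type*} [MeasurableSpace Ω] (μ : Measure Ω) [IsProbabilityMeasure μ]
    -- block indices: IID uniform
    (idx : ℕ → Ω → Fin m)
    (hidx_meas : ∀ k, Measurable (idx k))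
    (hidx_unif : ∀ k a, μ {ω | idx k ω = a} = ((m : ℝ≥0∞))⁻¹)
    (hidx_indep : iIndepFun idx μ)
    -- deterministic delay vectors, with finite liminf of the current delay
    (jv : ℕ → Fin m → ℕ)
    (hliminf : Filter.liminf (fun k => ((Finset.univ.sup (jv k) : ℕ) : ℕ∞)) atTop < ⊤)
    -- parameters ε₁, ε₂, … ∈ (0,∞) with ∑ εₗ < ∞ and coefficients cᵢ = ∑_{l=i}^∞ εₗ
    (ε : ℕ → ℝ) (hε : ∀ i, 0 < ε i)
    (hsum : Summable fun l : ℕ => ε (l + 1))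
    (cc : ℕ → ℝ) (hcc : ∀ i, cc i = ∑' t : ℕ, ε (i + t))
    -- step sizes η^k ≤ h_{j(k)} where h_j = (1 + c₁/m + ∑_{i=1}^j 1/εᵢ)⁻¹
    (hj : ℕ → ℝ)
    (hhj : ∀ j, hj j = (1 + cc 1 / (m : ℝ) + ∑ i ∈ Finset.range j, (ε (i + 1))⁻¹)⁻¹)
    (c : ℝ) (hc : c ∈ Set.Ioo (0 : ℝ) 1)
    (η : ℕ → ℝ) (hη : ∀ k, η k = c * hj (Finset.univ.sup (jv k)))
    -- the iterates
    (x : ℕ → Ω → PiLp 2 H) (x0 : PiLp 2 H) (hx0 : ∀ ω, x 0 ω = x0)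
    (hx_meas : ∀ k, Measurable (x k))
    -- the delayed iterate x̂^k = x^{k−j⃗(k)} (with x^n = x^0 for n < 0)
    (xhat : ℕ → Ω → PiLp 2 H)
    (hxhat : ∀ (k : ℕ) (ω : Ω) (l : Fin m), xhat k ω l = x (k - jv k l) ω l)
    -- the ARock recursion
    (hrec : ∀ (k : ℕ) (ω : Ω) (i : Fin m),
      x (k + 1) ω i = if i = idx k ω then
          x k ω i - η k • (xhat k ω i - T (xhat k ω) i)
        else x k ω i) :
    -- conclusion: a.s., ‖x^k − x*‖ converges for every fixed point x* of T
    ∀ᵐ ω ∂μ, ∀ xs : PiLp 2 H, T xs = xs →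
      ∃ r : ℝ, Filter.Tendsto (fun k => ‖x k ω - xs‖) Filter.atTop (𝓝 r) :=
  arock_norm_convergence_deterministic_general hm T hT μ idx hidx_meas hidx_unif hidx_indep jv ε hε
    hsum cc hcc hj hhj c hc η hη x x0 hx0 xhat hxhat hrec
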